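/- For every ε > 0, let T = 1/(√3 ε) and define x : [0, T) → ℝ by x(t) = (ε⁻¹ − √3 t)⁻¹. Then x is twice differentiable on [0,T), x(0) = ε, the pair (x, y) with y ≡ 0 satisfies the open-loop system ẍ − 6x³ + 90x y² + 32 y³ = 0 and ÿ + 90 x² y + 96 x y² = 0 on [0,T), and x(t) → ∞ as t → T⁻. In particular, the origin is not a Lyapunov stable equilibrium of the open-loop system. -/

import Mathlib

/-!
Along `y = 0` the system reduces to `ẍ = 6x³`, which is solved by `x = (c - √3 t)⁻¹`
because `f = (c - a t)⁻¹` satisfies `f' = a f²` and hence `f'' = 2a² f³`. This solution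
starts at `x(0) = c⁻¹` with `ẋ(0) = √3 c⁻²` and escapes to infinity at `t = c/√3`, so
initial data arbitrarily close to the origin leave every bounded neighbourhood of it.
-/

open Real Set Filter Topology

section InvSubMul

variable (a c : ℝ) {t : ℝ}

theorem hasDerivAt_inv_sub_mul (ht : c - a * t ≠ 0) :
    HasDerivAt (fun s => (c - a * s)⁻¹) (a * (c - a * t)⁻¹ ^ 2) t := by
  have hlin : HasDerivAt (fun s => c - a * s) (-a) t := by
    simpa using ((hasDerivAt_id t).const_mul a).const_sub c
  exact (hlin.inv ht).congr_deriv (by field_simp)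

theorem deriv_inv_sub_mul_eventuallyEq (ht : c - a * t ≠ 0) :
    deriv (fun s => (c - a * s)⁻¹) =ᶠ[𝓝 t] fun s => a * (c - a * s)⁻¹ ^ 2 := by
  have hopen : IsOpen {s : ℝ | c - a * s ≠ 0} := isOpen_ne_fun (by fun_prop) continuous_const
  filter_upwards [hopen.mem_nhds ht] with s hs using (hasDerivAt_inv_sub_mul a c hs).deriv

theorem hasDerivAt_deriv_inv_sub_mul (ht : c - a * t ≠ 0) :
    HasDerivAt (deriv fun s => (c - a * s)⁻¹) (2 * a ^ 2 * (c - a * t)⁻¹ ^ 3) t :=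
  ((((hasDerivAt_inv_sub_mul a c ht).pow 2).const_mul a).congr_of_eventuallyEq
    (deriv_inv_sub_mul_eventuallyEq a c ht)).congr_deriv (by ring)

variable {a} (ha : 0 < a)
include ha

theorem sub_mul_pos_of_lt_div (ht : t < c / a) : 0 < c - a * t :=
  sub_pos.mpr ((lt_div_iff₀' ha).mp ht)

theorem tendsto_inv_sub_mul_nhdsLT : Tendsto (fun s => (c - a * s)⁻¹) (𝓝[<] (c / a)) atTop := by
  refine tendsto_inv_nhdsGT_zero.comp (tendsto_nhdsWithin_iff.mpr ⟨?_, ?_⟩)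
  · have hzero : c - a * (c / a) = 0 := by rw [mul_div_cancel₀ c ha.ne', sub_self]
    have hcont : Continuous fun s : ℝ => c - a * s := by fun_prop
    simpa only [hzero] using (hcont.tendsto (c / a)).mono_left nhdsWithin_le_nhds
  · filter_upwards [self_mem_nhdsWithin] with s hs using sub_mul_pos_of_lt_div c ha hs

end InvSubMul

def SolvesOpenLoop (T : ℝ) (u v : ℝ → ℝ) : Prop :=
  (∀ t ∈ Ico (0 : ℝ) T, DifferentiableAt ℝ u t ∧
    DifferentiableAt ℝ (deriv u) t ∧ DifferentiableAt ℝ v t ∧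
    DifferentiableAt ℝ (deriv v) t) ∧
  (∀ t ∈ Ico (0 : ℝ) T,
    deriv (deriv u) t - 6 * u t ^ 3 + 90 * u t * v t ^ 2 + 32 * v t ^ 3 = 0 ∧
    deriv (deriv v) t + 90 * u t ^ 2 * v t + 96 * u t * v t ^ 2 = 0)

theorem solvesOpenLoop_inv_sub_sqrt_three_mul (c : ℝ) :
    SolvesOpenLoop (c / √3) (fun t => (c - √3 * t)⁻¹) fun _ => 0 := by
  have hne : ∀ t ∈ Ico (0 : ℝ) (c / √3), c - √3 * t ≠ 0 := fun t ht =>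
    (sub_mul_pos_of_lt_div c (by positivity) ht.2).ne'
  refine ⟨fun t ht => ?_, fun t ht => ⟨?_, by simp⟩⟩
  · exact ⟨(hasDerivAt_inv_sub_mul _ c (hne t ht)).differentiableAt,
      (hasDerivAt_deriv_inv_sub_mul _ c (hne t ht)).differentiableAt,
      differentiableAt_const _, by simp⟩
  · rw [(hasDerivAt_deriv_inv_sub_mul _ c (hne t ht)).deriv, sq_sqrt zero_le_three]
    ring

theorem not_lyapunovStable_openLoop :
    ¬ (∀ ε' > (0 : ℝ), ∃ δ > (0 : ℝ), ∀ T' > (0 : ℝ), ∀ u v : ℝ → ℝ,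
        (∀ t ∈ Ico (0 : ℝ) T', DifferentiableAt ℝ u t ∧
          DifferentiableAt ℝ (deriv u) t ∧ DifferentiableAt ℝ v t ∧
          DifferentiableAt ℝ (deriv v) t) →
        (∀ t ∈ Ico (0 : ℝ) T',
          deriv (deriv u) t - 6 * u t ^ 3 + 90 * u t * v t ^ 2 + 32 * v t ^ 3 = 0 ∧
          deriv (deriv v) t + 90 * u t ^ 2 * v t + 96 * u t * v t ^ 2 = 0) →
        ‖(u 0, v 0, deriv u 0, deriv v 0)‖ < δ →
        ∀ t ∈ Ico (0 : ℝ) T', ‖(u t, v t, deriv u t, deriv v t)‖ < ε') := by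
  intro hstable
  obtain ⟨δ, hδ, hδstable⟩ := hstable 1 one_pos
  have hsmall : ∀ᶠ e in 𝓝[>] (0 : ℝ), ‖(e, (0 : ℝ), √3 * e ^ 2, (0 : ℝ))‖ < δ := by
    have hcont : Continuous fun e : ℝ => ‖(e, (0 : ℝ), √3 * e ^ 2, (0 : ℝ))‖ := by fun_prop
    exact ((hcont.tendsto 0).mono_left nhdsWithin_le_nhds).eventually_lt_const (by simpa using hδ)
  obtain ⟨e, hsmall, he⟩ := (hsmall.and self_mem_nhdsWithin).exists
  set c := e⁻¹
  have hc : 0 < c := inv_pos.mpr he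
  have hT : 0 < c / √3 := by positivity
  obtain ⟨hdiff, hode⟩ := solvesOpenLoop_inv_sub_sqrt_three_mul c
  have hinit : ‖((c - √3 * 0)⁻¹, (0 : ℝ), deriv (fun t => (c - √3 * t)⁻¹) 0,
      deriv (fun _ : ℝ => (0 : ℝ)) 0)‖ < δ := by
    rw [(hasDerivAt_inv_sub_mul _ c (by simpa using hc.ne')).deriv]
    simpa [c] using hsmall
  have hescape := (tendsto_inv_sub_mul_nhdsLT c (sqrt_pos.mpr three_pos)).eventually_ge_atTop 1
  obtain ⟨t, hlarge, htT⟩ := (hescape.and (Ioo_mem_nhdsLT hT)).exists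
  have hbound := hδstable _ hT _ _ hdiff hode hinit t (Ioo_subset_Ico_self htT)
  have hx : (c - √3 * t)⁻¹ < 1 :=
    ((Real.le_norm_self _).trans (norm_fst_le _)).trans_lt hbound
  exact hx.not_ge hlarge

theorem statement16 (ε : ℝ) (T : ℝ) (hT : T = 1 / (Real.sqrt 3 * ε))
    (x : ℝ → ℝ) (hx : ∀ t, x t = (ε⁻¹ - Real.sqrt 3 * t)⁻¹)
    (y : ℝ → ℝ) (hy : ∀ t, y t = 0) :
    -- `x` is twice differentiable on `[0, T)`
    (∀ t ∈ Ico (0 : ℝ) T, DifferentiableAt ℝ x t ∧ DifferentiableAt ℝ (deriv x) t) ∧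
    -- initial condition
    x 0 = ε ∧
    -- `(x, y)` solves the open-loop system on `[0, T)`
    (∀ t ∈ Ico (0 : ℝ) T,
      deriv (deriv x) t - 6 * x t ^ 3 + 90 * x t * y t ^ 2 + 32 * y t ^ 3 = 0 ∧
      deriv (deriv y) t + 90 * x t ^ 2 * y t + 96 * x t * y t ^ 2 = 0) ∧
    -- blow-up as `t → T⁻`
    Tendsto x (nhdsWithin T (Iio T)) atTop ∧
    -- in particular, the origin is not a Lyapunov stable equilibrium of the
    -- open-loop system
    ¬ (∀ ε' > (0 : ℝ), ∃ δ > (0 : ℝ), ∀ T' > (0 : ℝ), ∀ u v : ℝ → ℝ,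
        (∀ t ∈ Ico (0 : ℝ) T', DifferentiableAt ℝ u t ∧
          DifferentiableAt ℝ (deriv u) t ∧ DifferentiableAt ℝ v t ∧
          DifferentiableAt ℝ (deriv v) t) →
        (∀ t ∈ Ico (0 : ℝ) T',
          deriv (deriv u) t - 6 * u t ^ 3 + 90 * u t * v t ^ 2 + 32 * v t ^ 3 = 0 ∧
          deriv (deriv v) t + 90 * u t ^ 2 * v t + 96 * u t * v t ^ 2 = 0) →
        ‖(u 0, v 0, deriv u 0, deriv v 0)‖ < δ →
        ∀ t ∈ Ico (0 : ℝ) T', ‖(u t, v t, deriv u t, deriv v t)‖ < ε') := by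
  obtain rfl : x = fun t => (ε⁻¹ - √3 * t)⁻¹ := funext hx
  obtain rfl : y = fun _ => 0 := funext hy
  obtain rfl : T = ε⁻¹ / √3 := by rw [hT, one_div, mul_inv, div_eq_mul_inv, mul_comm]
  obtain ⟨hdiff, hode⟩ := solvesOpenLoop_inv_sub_sqrt_three_mul ε⁻¹
  exact ⟨fun t ht => ⟨(hdiff t ht).1, (hdiff t ht).2.1⟩, by simp, hode,
    tendsto_inv_sub_mul_nhdsLT _ (by positivity), not_lyapunovStable_openLoop⟩
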